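/- For every configuration η in ∂_{≥2}𝒜 there exists a configuration ζ in ∂₁𝒜 with H(ζ) < H(η). More precisely: let I be a minimal-cardinality subset of one sublattice with η^I ∈ 𝒜; assume |I| ≥ 2, η(x) = +1 and H(η^x) < H(η) for all x ∈ I; then for any x ∈ I, the configuration ζ = η^{I∖{x}} satisfies ζ ∉ 𝒜, ζ^x ∈ 𝒜, and H(ζ) < H(η). -/

import Mathlib

/-! Sites of one sublattice are never neighbours, so when they are flipped one at a time, each
flip finds its neighbourhood as in `η`. Since the energy change of a single flip depends only on
the spins at the site and its neighbours, `H(η^S) - H(η)` is the sum of the single-flip changes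
for every `S` in one sublattice. For `ζ = η^(I \ {x})`, minimality of `|I|` gives `ζ ∉ 𝒜`,
`ζ^x = η^I ∈ 𝒜`, and `H(ζ) - H(η)` is a nonempty sum of negative single-flip changes. -/

open Finset

abbrev Site (L M : ℕ) := ZMod (2*L) × ZMod (2*M)

abbrev Config (L M : ℕ) := Site L M → Bool

def spin (b : Bool) : ℤ := if b then 1 else -1

def flipC {L M : ℕ} (σ : Config L M) (I : Finset (Site L M)) : Config L M :=
  fun x => if x ∈ I then !(σ x) else σ x

noncomputable def ham {L M : ℕ} [NeZero L] [NeZero M] (J h : ℝ) (σ : Config L M) : ℝ :=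
  -(J/2) * ∑ x : Site L M,
      ((spin (σ x) * spin (σ (x + (1,0))) + spin (σ x) * spin (σ (x + (0,1))) : ℤ) : ℝ)
    - (h/2) * ∑ x : Site L M, ((spin (σ x) : ℤ) : ℝ)

def evens (L M : ℕ) [NeZero L] [NeZero M] : Finset (Site L M) :=
  univ.filter fun x => Even (x.1.val + x.2.val)

def odds (L M : ℕ) [NeZero L] [NeZero M] : Finset (Site L M) :=
  univ.filter fun x => ¬ Even (x.1.val + x.2.val)

def adj {L M : ℕ} (x y : Site L M) : Prop :=
  y = x + (1,0) ∨ x = y + (1,0) ∨ y = x + (0,1) ∨ x = y + (0,1)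

section Sublattice

variable {L M : ℕ}

def parity (x : Site L M) : ZMod 2 := ZMod.cast x.1 + ZMod.cast x.2

lemma parity_add (x v : Site L M) : parity (x + v) = parity x + parity v := by
  simp only [parity, Prod.fst_add, Prod.snd_add, ZMod.cast_add (dvd_mul_right 2 _)]
  ring

lemma parity_of_adj {x y : Site L M} (hxy : adj x y) : parity y = parity x + 1 := by
  have e1 : parity ((1, 0) : Site L M) = 1 := by
    simp [parity, ZMod.cast_one (dvd_mul_right 2 L)]
  have e2 : parity ((0, 1) : Site L M) = 1 := by
    simp [parity, ZMod.cast_one (dvd_mul_right 2 M)]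
  have two : (1 : ZMod 2) + 1 = 0 := rfl
  rcases hxy with rfl | rfl | rfl | rfl <;>
    simp only [parity_add, e1, e2, add_assoc, two, add_zero]

variable [NeZero L] [NeZero M]

lemma mem_evens_iff {x : Site L M} : x ∈ evens L M ↔ parity x = 0 := by
  rw [evens, mem_filter, parity, ZMod.cast_eq_val, ZMod.cast_eq_val, ← Nat.cast_add,
    ZMod.natCast_eq_zero_iff_even]
  simp

lemma mem_odds_iff {x : Site L M} : x ∈ odds L M ↔ parity x ≠ 0 := by
  rw [odds, mem_filter, parity, ZMod.cast_eq_val, ZMod.cast_eq_val, ← Nat.cast_add, ne_eq,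
    ZMod.natCast_eq_zero_iff_even]
  simp

def OnOneSublattice (S : Finset (Site L M)) : Prop := S ⊆ evens L M ∨ S ⊆ odds L M

lemma OnOneSublattice.mono {S T : Finset (Site L M)} (hS : OnOneSublattice S) (hTS : T ⊆ S) :
    OnOneSublattice T :=
  hS.imp hTS.trans hTS.trans

lemma OnOneSublattice.parity_eq {S : Finset (Site L M)} (hS : OnOneSublattice S)
    {x y : Site L M} (hx : x ∈ S) (hy : y ∈ S) : parity x = parity y := by
  rcases hS with hS | hS
  · rw [mem_evens_iff.mp (hS hx), mem_evens_iff.mp (hS hy)]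
  · have key : ∀ p q : ZMod 2, p ≠ 0 → q ≠ 0 → p = q := by decide
    exact key _ _ (mem_odds_iff.mp (hS hx)) (mem_odds_iff.mp (hS hy))

lemma OnOneSublattice.notMem_of_adj {S : Finset (Site L M)} (hS : OnOneSublattice S)
    {x y : Site L M} (hx : x ∈ S) (hxy : adj x y) : y ∉ S := fun hy => by
  have key : ∀ p : ZMod 2, p ≠ p + 1 := by decide
  exact key _ ((hS.parity_eq hx hy).trans (parity_of_adj hxy))

end Sublattice

section Energy

variable {L M : ℕ}

lemma flipC_apply_of_notMem (σ : Config L M) {S : Finset (Site L M)} {y : Site L M}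
    (hy : y ∉ S) : flipC σ S y = σ y := if_neg hy

lemma flipC_empty (σ : Config L M) : flipC σ ∅ = σ :=
  funext fun _ => flipC_apply_of_notMem σ (notMem_empty _)

lemma flipC_flipC_singleton (σ : Config L M) {S : Finset (Site L M)} {y : Site L M}
    (hy : y ∉ S) : flipC (flipC σ S) {y} = flipC σ (insert y S) := by
  funext z
  by_cases hzy : z = y
  · subst hzy; simp [flipC, hy]
  · simp [flipC, hzy]

variable [NeZero L] [NeZero M]

def bondSum (e : Site L M) (σ : Config L M) : ℤ := ∑ x, spin (σ x) * spin (σ (x + e))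

def magnetization (σ : Config L M) : ℤ := ∑ x, spin (σ x)

lemma ham_eq (J h : ℝ) (σ : Config L M) :
    ham J h σ = -(J / 2) * ((bondSum (1, 0) σ : ℝ) + bondSum (0, 1) σ)
      - (h / 2) * (magnetization σ : ℝ) := by
  simp only [ham, bondSum, magnetization, Int.cast_add, Int.cast_sum, sum_add_distrib]

lemma bondSum_flipC_sub_congr (e : Site L M) {σ τ : Config L M} {a : Site L M}
    (ha : σ a = τ a) (hplus : σ (a + e) = τ (a + e)) (hminus : σ (a - e) = τ (a - e)) :
    bondSum e (flipC σ {a}) - bondSum e σ = bondSum e (flipC τ {a}) - bondSum e τ := by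
  simp only [bondSum, ← sum_sub_distrib]
  refine sum_congr rfl fun x _ => ?_
  by_cases hx : x = a
  · subst hx
    simp only [flipC, ha, hplus]
  by_cases hxe : x + e = a
  · obtain rfl : x = a - e := eq_sub_of_add_eq hxe
    simp only [flipC, hxe, ha, hminus]
  · simp [flipC, hx, hxe]

lemma magnetization_flipC_sub_congr {σ τ : Config L M} {a : Site L M} (ha : σ a = τ a) :
    magnetization (flipC σ {a}) - magnetization σ
      = magnetization (flipC τ {a}) - magnetization τ := by
  simp only [magnetization, ← sum_sub_distrib]
  refine sum_congr rfl fun x _ => ?_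
  by_cases hx : x = a
  · subst hx
    simp only [flipC, ha]
  · simp [flipC, hx]

lemma ham_flipC_sub_congr (J h : ℝ) {σ τ : Config L M} {a : Site L M}
    (hστ : ∀ y, y = a ∨ adj a y → σ y = τ y) :
    ham J h (flipC σ {a}) - ham J h σ = ham J h (flipC τ {a}) - ham J h τ := by
  have ha := hστ a (.inl rfl)
  have hnbr : ∀ y, adj a y → σ y = τ y := fun y hy => hστ y (.inr hy)
  have h₁ := bondSum_flipC_sub_congr (1, 0) ha (hnbr _ (.inl rfl))
    (hnbr _ (.inr (.inl (sub_add_cancel _ _).symm)))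
  have h₂ := bondSum_flipC_sub_congr (0, 1) ha (hnbr _ (.inr (.inr (.inl rfl))))
    (hnbr _ (.inr (.inr (.inr (sub_add_cancel _ _).symm))))
  have h₃ := magnetization_flipC_sub_congr ha
  simp only [ham_eq]
  rify at h₁ h₂ h₃
  linear_combination (-(J / 2)) * (h₁ + h₂) - (h / 2) * h₃

end Energy

lemma ham_flipC_sub_eq_sum {L M : ℕ} [NeZero L] [NeZero M] (J h : ℝ) (η : Config L M)
    {S : Finset (Site L M)} (hS : OnOneSublattice S) :
    ham J h (flipC η S) - ham J h η = ∑ y ∈ S, (ham J h (flipC η {y}) - ham J h η) := by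
  induction S using Finset.induction_on with
  | empty => simp [flipC_empty]
  | @insert a S ha ih =>
    have hagree : ∀ y, y = a ∨ adj a y → flipC η S y = η y := by
      rintro y (rfl | hay)
      · exact flipC_apply_of_notMem η ha
      · exact flipC_apply_of_notMem η fun hy =>
          hS.notMem_of_adj (mem_insert_self a S) hay (mem_insert_of_mem hy)
    calc ham J h (flipC η (insert a S)) - ham J h η
        = (ham J h (flipC (flipC η S) {a}) - ham J h (flipC η S))
          + (ham J h (flipC η S) - ham J h η) := by
          rw [flipC_flipC_singleton η ha]; ring
      _ = (ham J h (flipC η {a}) - ham J h η)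
          + ∑ y ∈ S, (ham J h (flipC η {y}) - ham J h η) := by
          rw [ham_flipC_sub_congr J h hagree, ih (hS.mono (subset_insert a S))]
      _ = _ := by rw [sum_insert ha]

theorem multi_flip_boundary_dominated_general {L M : ℕ} [NeZero L] [NeZero M]
    (J h : ℝ)
    (A : Set (Config L M)) (η : Config L M)
    (I : Finset (Site L M)) (hIs : I ⊆ evens L M ∨ I ⊆ odds L M)
    (hIA : flipC η I ∈ A)
    (hmin : ∀ I' : Finset (Site L M), I'.Nonempty → (I' ⊆ evens L M ∨ I' ⊆ odds L M) →
      flipC η I' ∈ A → I.card ≤ I'.card)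
    (hcard : 2 ≤ I.card)
    (hplus : ∀ x ∈ I, η x = true ∧ ham J h (flipC η {x}) < ham J h η) :
    ∀ x ∈ I, flipC η (I.erase x) ∉ A ∧ flipC (flipC η (I.erase x)) {x} ∈ A ∧
      ham J h (flipC η (I.erase x)) < ham J h η := by
  intro x hx
  have hcard' : (I.erase x).card + 1 = I.card := card_erase_add_one hx
  have hne : (I.erase x).Nonempty := card_pos.mp (by omega)
  have hsub : OnOneSublattice (I.erase x) := OnOneSublattice.mono hIs (erase_subset x I)
  refine ⟨fun hA => ?_, ?_, ?_⟩
  · have := hmin _ hne hsub hA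
    omega
  · rwa [flipC_flipC_singleton η (notMem_erase x I), insert_erase hx]
  · have hdrop : ∑ y ∈ I.erase x, (ham J h (flipC η {y}) - ham J h η) < 0 :=
      sum_neg (fun y hy => sub_neg.mpr (hplus y (mem_of_mem_erase hy)).2) hne
    linarith [ham_flipC_sub_eq_sum J h η hsub]

/-- from a configuration of the boundary part reached only by multi-spin
flips one can pass to a strictly lower-energy configuration of the single-flip boundary. -/
theorem multi_flip_boundary_dominated {L M : ℕ} [NeZero L] [NeZero M]
    (J h : ℝ) (hJ : 0 < J) (hh : 0 < h)
    (A : Set (Config L M)) (η : Config L M) (hη : η ∉ A)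
    (I : Finset (Site L M)) (hIs : I ⊆ evens L M ∨ I ⊆ odds L M)
    (hIA : flipC η I ∈ A)
    (hmin : ∀ I' : Finset (Site L M), I'.Nonempty → (I' ⊆ evens L M ∨ I' ⊆ odds L M) →
      flipC η I' ∈ A → I.card ≤ I'.card)
    (hcard : 2 ≤ I.card)
    (hplus : ∀ x ∈ I, η x = true ∧ ham J h (flipC η {x}) < ham J h η) :
    ∀ x ∈ I, flipC η (I.erase x) ∉ A ∧ flipC (flipC η (I.erase x)) {x} ∈ A ∧
      ham J h (flipC η (I.erase x)) < ham J h η :=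
  multi_flip_boundary_dominated_general J h A η I hIs hIA hmin hcard hplus
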